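/- arXiv:2401.17360 — 4 statements merged into one kernel-verified Lean document; each statement's English description precedes it below -/
import Mathlib

section
/- Let 𝓛 be a nonempty convex subset of a Coxeter group W and let τ_i be the noninvertible Bender–Knuth toggles defined with respect to 𝓛. For every u ∈ W and i ∈ I, we have Sep(τ_i(u)) ⊆ Sep(u). Moreover τ_i(u) = s_i u if Sep(s_i u) ⊆ Sep(u), and τ_i(u) = u otherwise. -/
open scoped Classical

noncomputable section

namespace BKBilliards

variable {I : Type*} [Fintype I] [DecidableEq I]
variable {M : CoxeterMatrix I} {W : Type*} [Group W]

/-- The simple root indexed by `i`, i.e. the `i`-th standard basis vector of `ℝ^I`. -/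
def sroot (i : I) : I → ℝ := Pi.single i 1

/-- The data `(ρ, B)` constitutes the standard geometric representation of the Coxeter
system `cs`, together with its induced symmetric bilinear form (with `μ = 1` on all
pairs whose Coxeter matrix entry is `∞`, encoded as `0`). -/
structure IsGeometric (cs : CoxeterSystem M W) (ρ : Representation ℝ W (I → ℝ))
    (B : LinearMap.BilinForm ℝ (I → ℝ)) : Prop where
  /-- `B(αᵢ, αᵢ') = -cos (π / m i i')` when `m i i' ≠ ∞`. -/
  form_apply_of_ne_zero : ∀ i i' : I, M i i' ≠ 0 →
    B (sroot i) (sroot i') = - Real.cos (Real.pi / (M i i' : ℝ))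
  /-- `B(αᵢ, αᵢ') = -1` when `m i i' = ∞` (encoded as `0`). -/
  form_apply_of_eq_zero : ∀ i i' : I, M i i' = 0 → B (sroot i) (sroot i') = -1
  /-- Each simple reflection acts by the reflection formula. -/
  simple_apply : ∀ (i : I) (v : I → ℝ), ρ (cs.simple i) v = v - (2 * B v (sroot i)) • sroot i

variable (ρ : Representation ℝ W (I → ℝ))

/-- The root system `Φ = {w αᵢ : w ∈ W, i ∈ I}`. -/
def Phi : Set (I → ℝ) := {v | ∃ (w : W) (i : I), v = ρ w (sroot i)}

/-- The half-space `H_β⁺ = {w ∈ W : w β ∈ Φ⁺}`: for a root `β`, membership amounts to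
`w β` being a nonnegative combination of the simple roots. -/
def Hplus (β : I → ℝ) : Set W := {w : W | 0 ≤ ρ w β}

/-- `R(𝓛) = {β ∈ Φ : 𝓛 ⊆ H_β⁺}`. -/
def RL (L : Set W) : Set (I → ℝ) := {β | β ∈ Phi ρ ∧ ∀ w ∈ L, w ∈ Hplus ρ β}

/-- `𝓛` is convex if it equals the intersection of all half-spaces containing it. -/
def IsConvex (L : Set W) : Prop := ∀ u : W, (∀ β ∈ RL ρ L, u ∈ Hplus ρ β) → u ∈ L

/-- The set of separators of `u`: `Sep(u) = {β ∈ R(𝓛) : u β ∈ Φ⁻}`. -/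
def Sep (L : Set W) (u : W) : Set (I → ℝ) := {β | β ∈ RL ρ L ∧ ρ u β ≤ 0}

variable (cs : CoxeterSystem M W)

/-- The noninvertible Bender–Knuth toggle `τᵢ` associated to the convex set `𝓛`. -/
def toggle (L : Set W) (i : I) (u : W) : W :=
  if ρ u⁻¹ (sroot i) ∈ RL ρ L then u else cs.simple i * u

/-- For a word `𝗐 = i_M ⋯ i_1` (a list whose head is `i_M`), the composition
`τ_𝗐 = τ_{i_M} ⋯ τ_{i_1}`. -/
def toggleWord (L : Set W) (l : List I) (u : W) : W :=
  l.foldr (fun i v => toggle ρ cs L i v) u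

/-- `β` dominates `β'` if `H_β⁺ ⊇ H_{β'}⁺`. -/
def Dominates (β β' : I → ℝ) : Prop := Hplus ρ β' ⊆ Hplus ρ β

/-- A small root: a positive root dominating no positive root other than itself. -/
def IsSmall (β : I → ℝ) : Prop :=
  β ∈ Phi ρ ∧ 0 ≤ β ∧ ∀ β', β' ∈ Phi ρ → 0 ≤ β' → Dominates ρ β β' → β' = β

/-- `β` is a transmitting root of the stratum `Str(R)`:
`β ∈ R(𝓛)` and `β = -w⁻¹ αᵢ` for some `w` with `Sep(w) = R` and some `i ∈ I`. -/
def IsTransmitting (L : Set W) (R : Set (I → ℝ)) (β : I → ℝ) : Prop :=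
  β ∈ RL ρ L ∧ ∃ (w : W) (i : I), Sep ρ L w = R ∧ β = - ρ w⁻¹ (sroot i)

end BKBilliards

open BKBilliards

/-!
Every root of the geometric representation is nonnegative or nonpositive. Indeed, if `s_i` is not
a right descent of `w ≠ 1`, pick a right descent `s_j` and split off, without cancellation, the
longest right factor of `w` alternating between `s_i` and `s_j`. Its length `k` is less than
`m_ij`, so it sends `α_i` to a combination of `α_i` and `α_j` whose coefficients are the Chebyshev
values `U_k(cos(π/m_ij))`, `U_{k-1}(cos(π/m_ij))`, which are nonnegative; the remaining left factor
has neither `s_i` nor `s_j` as a right descent, so induction on the length applies.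

Now let `β ∈ Sep(s_i u)`. The root `u β` has `s_i (u β) ≤ 0`, and a nonnegative root with this
property is a positive multiple of `α_i`. Hence either `u β ≤ 0`, i.e. `β ∈ Sep(u)`, or `β` is a
positive multiple of `u⁻¹ α_i`, which then lies in `R(𝓛)`. Conversely, if `u⁻¹ α_i ∈ R(𝓛)`, it is
a separator of `s_i u` but not of `u`. So `Sep(s_i u) ⊆ Sep(u)` holds exactly when `τ_i` moves `u`.
-/

open Polynomial Polynomial.Chebyshev

lemma Polynomial.Chebyshev.U_real_cos_pi_div_nonneg {m : ℕ} (hm : 2 ≤ m) {n : ℤ} (hn : -1 ≤ n)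
    (hnm : n < m) : 0 ≤ (U ℝ n).eval (Real.cos (Real.pi / m)) := by
  have hm' : (2 : ℝ) ≤ m := by exact_mod_cast hm
  have hθ : 0 < Real.pi / m := by positivity
  have hsin : 0 < Real.sin (Real.pi / m) := by
    apply Real.sin_pos_of_pos_of_lt_pi hθ
    rw [div_lt_iff₀ (by positivity)]
    nlinarith [Real.pi_pos]
  refine nonneg_of_mul_nonneg_left ?_ hsin
  rw [U_real_cos]
  apply Real.sin_nonneg_of_nonneg_of_le_pi
  · have : (0 : ℝ) ≤ n + 1 := by exact_mod_cast (by omega : (0 : ℤ) ≤ n + 1)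
    positivity
  · have : (n : ℝ) + 1 ≤ m := by exact_mod_cast (by omega : n + 1 ≤ (m : ℤ))
    calc ((n : ℝ) + 1) * (Real.pi / m) ≤ m * (Real.pi / m) := by gcongr
      _ = Real.pi := by field_simp

namespace CoxeterSystem

variable {B W : Type*} [Group W] {M : CoxeterMatrix B} (cs : CoxeterSystem M W)

theorem exists_eq_mul_alternatingWord_of_isRightDescent {w : W} {j : B}
    (hj : cs.IsRightDescent w j) (i : B) :
    ∃ (v : W) (k : ℕ), 1 ≤ k ∧ w = v * cs.wordProd (alternatingWord i j k) ∧
      cs.length w = cs.length v + k ∧ ¬ cs.IsRightDescent v i ∧ ¬ cs.IsRightDescent v j := by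
  induction hn : cs.length w using Nat.strong_induction_on generalizing w i j with
  | _ n ih =>
  have hlen := cs.isRightDescent_iff.mp hj
  have hnj := cs.isRightDescent_iff_not_isRightDescent_mul.mp hj
  by_cases hi : cs.IsRightDescent (w * cs.simple j) i
  · obtain ⟨v, k, -, heq, hl, hvj, hvi⟩ := ih _ (by omega) hi j rfl
    refine ⟨v, k + 1, by omega, ?_, by omega, hvi, hvj⟩
    rw [alternatingWord_succ, wordProd_concat, ← mul_assoc, ← heq,
      simple_mul_simple_cancel_right]
  · refine ⟨w * cs.simple j, 1, le_rfl, ?_, by omega, hi, hnj⟩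
    rw [show alternatingWord i j 1 = [j] from rfl, wordProd_singleton,
      simple_mul_simple_cancel_right]

theorem lt_of_not_isRightDescent_mul_alternatingWord {v : W} {i j : B} {k : ℕ}
    (hlen : cs.length (v * cs.wordProd (alternatingWord i j k)) = cs.length v + k)
    (hi : ¬ cs.IsRightDescent (v * cs.wordProd (alternatingWord i j k)) i) (hM : M i j ≠ 0) :
    k < M i j := by
  have hred : cs.IsReduced (alternatingWord i j k) := by
    have := cs.length_mul_le v (cs.wordProd (alternatingWord i j k))
    have := cs.length_wordProd_le (alternatingWord i j k)
    rw [length_alternatingWord] at this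
    rw [IsReduced, length_alternatingWord]
    omega
  refine lt_of_le_of_ne (not_lt.mp fun h => cs.not_isReduced_alternatingWord i j hM h hred)
    fun hk => hi ?_
  obtain ⟨m, rfl⟩ : ∃ m, k = m + 1 := ⟨k - 1, by omega⟩
  -- by the braid relation, the alternating word of length `m_ij` also ends with `i`
  have hbraid : cs.wordProd (alternatingWord i j (m + 1)) =
      cs.wordProd (alternatingWord i j m) * cs.simple i := by
    have := cs.wordProd_braidWord_eq i j
    rw [braidWord, braidWord, ← M.symmetric i j, ← hk, alternatingWord_succ j i,
      wordProd_concat] at this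
    exact this
  have := cs.length_mul_le v (cs.wordProd (alternatingWord i j m))
  have := cs.length_wordProd_le (alternatingWord i j m)
  rw [length_alternatingWord] at this
  rw [IsRightDescent, hlen, hbraid, ← mul_assoc, simple_mul_simple_cancel_right]
  omega

end CoxeterSystem

namespace BKBilliards

open CoxeterSystem

variable {I : Type*} [DecidableEq I]

lemma sroot_nonneg (i : I) : 0 ≤ sroot i := by
  simp [sroot, Pi.single_nonneg]

lemma not_sroot_nonpos (i : I) : ¬ sroot i ≤ 0 :=
  fun h => absurd (h i) (by simp [sroot])

lemma eq_smul_sroot_of_nonneg {v : I → ℝ} {i : I} (hv : 0 ≤ v)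
    (hne : ∀ x ≠ i, v x ≤ 0) : v = v i • sroot i := by
  ext x
  by_cases hx : x = i
  · subst hx
    simp [sroot]
  · simp [sroot, hx, le_antisymm (hne x hx) (hv x)]

/-- For a geometric form this is `sin((n+1)π/m_ij) / sin(π/m_ij)`, or `n + 1` if `m_ij = ∞`. -/
def dihedralCoeff (B : LinearMap.BilinForm ℝ (I → ℝ)) (i j : I) (n : ℤ) : ℝ :=
  (U ℝ n).eval (-B (sroot i) (sroot j))

lemma dihedralCoeff_add_one (B : LinearMap.BilinForm ℝ (I → ℝ)) (i j : I) (n : ℤ) :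
    dihedralCoeff B i j (n + 1) =
      2 * -B (sroot i) (sroot j) * dihedralCoeff B i j n - dihedralCoeff B i j (n - 1) := by
  simp [dihedralCoeff, U_add_one]

variable {W : Type*} [Group W] {ρ : Representation ℝ W (I → ℝ)}

lemma apply_mem_Phi (w : W) {β : I → ℝ} (hβ : β ∈ Phi ρ) : ρ w β ∈ Phi ρ := by
  obtain ⟨w', j, rfl⟩ := hβ
  exact ⟨w * w', j, by rw [map_mul, Module.End.mul_apply]⟩

lemma mem_RL_of_pos_smul {L : Set W} {γ : I → ℝ} {c : ℝ} (hc : 0 < c) (hγ : γ ∈ Phi ρ)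
    (h : c • γ ∈ RL ρ L) : γ ∈ RL ρ L := by
  refine ⟨hγ, fun w hw => ?_⟩
  have : 0 ≤ ρ w (c • γ) := h.2 w hw
  rwa [map_smul, smul_nonneg_iff_nonneg_of_pos_left hc] at this

namespace IsGeometric

variable {M : CoxeterMatrix I} {cs : CoxeterSystem M W}
  {B : LinearMap.BilinForm ℝ (I → ℝ)} (hgeom : IsGeometric cs ρ B)
include hgeom

lemma form_sroot_self (i : I) : B (sroot i) (sroot i) = 1 := by
  rw [hgeom.form_apply_of_ne_zero i i (by simp), M.diagonal i]
  simp

lemma form_sroot_comm (i j : I) : B (sroot j) (sroot i) = B (sroot i) (sroot j) := by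
  by_cases h : M i j = 0
  · rw [hgeom.form_apply_of_eq_zero i j h,
      hgeom.form_apply_of_eq_zero j i (by rwa [M.symmetric])]
  · rw [hgeom.form_apply_of_ne_zero i j h,
      hgeom.form_apply_of_ne_zero j i (by rwa [M.symmetric]), M.symmetric]

lemma simple_apply_sroot_self (i : I) : ρ (cs.simple i) (sroot i) = -sroot i := by
  rw [hgeom.simple_apply, hgeom.form_sroot_self]
  module

lemma simple_apply_apply_of_ne {i x : I} (hx : x ≠ i) (v : I → ℝ) :
    ρ (cs.simple i) v x = v x := by
  simp [hgeom.simple_apply, sroot, hx]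

lemma eq_smul_sroot_of_nonneg_of_simple_apply_nonpos {v : I → ℝ} {i : I} (hv : 0 ≤ v)
    (hsv : ρ (cs.simple i) v ≤ 0) : v = v i • sroot i :=
  eq_smul_sroot_of_nonneg hv fun x hx => hgeom.simple_apply_apply_of_ne hx v ▸ hsv x

lemma apply_alternatingWord_sroot (i j : I) (k : ℕ) :
    ρ (cs.wordProd (alternatingWord i j k)) (sroot i) =
      if Even k then dihedralCoeff B i j k • sroot i + dihedralCoeff B i j (k - 1) • sroot j
      else dihedralCoeff B i j (k - 1) • sroot i + dihedralCoeff B i j k • sroot j := by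
  induction k with
  | zero => simp [alternatingWord, dihedralCoeff]
  | succ k ih =>
    have hrec := dihedralCoeff_add_one B i j k
    rw [alternatingWord_succ', wordProd_cons, map_mul, Module.End.mul_apply, ih]
    push_cast
    rw [add_sub_cancel_right, hrec]
    by_cases hk : Even k
    · simp only [hk, Nat.even_add_one, not_true_eq_false, if_true, if_false]
      rw [map_add, map_smul, map_smul, hgeom.simple_apply_sroot_self, hgeom.simple_apply]
      module
    · simp only [hk, Nat.even_add_one, not_false_eq_true, if_true, if_false]
      rw [map_add, map_smul, map_smul, hgeom.simple_apply_sroot_self, hgeom.simple_apply,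
        hgeom.form_sroot_comm i j]
      module

lemma dihedralCoeff_nonneg {i j : I} (hij : i ≠ j) {n : ℤ} (hn : -1 ≤ n)
    (hnM : M i j = 0 ∨ n < M i j) : 0 ≤ dihedralCoeff B i j n := by
  by_cases hM : M i j = 0
  · rw [dihedralCoeff, hgeom.form_apply_of_eq_zero i j hM, neg_neg, U_eval_one]
    exact_mod_cast (by omega : (0 : ℤ) ≤ n + 1)
  · rw [dihedralCoeff, hgeom.form_apply_of_ne_zero i j hM, neg_neg]
    exact U_real_cos_pi_div_nonneg (by have := M.off_diagonal i j hij; omega) hn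
      (hnM.resolve_left hM)

lemma exists_nonneg_apply_alternatingWord_sroot {i j : I} (hij : i ≠ j) {k : ℕ}
    (hk : M i j = 0 ∨ k < M i j) :
    ∃ a b : ℝ, 0 ≤ a ∧ 0 ≤ b ∧
      ρ (cs.wordProd (alternatingWord i j k)) (sroot i) = a • sroot i + b • sroot j := by
  have hk' : M i j = 0 ∨ (k : ℤ) < M i j := hk.imp_right (by exact_mod_cast ·)
  have h₀ := hgeom.dihedralCoeff_nonneg hij (by omega) hk'
  have h₁ := hgeom.dihedralCoeff_nonneg hij (n := k - 1) (by omega) (hk'.imp_right (by omega))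
  rw [hgeom.apply_alternatingWord_sroot]
  split_ifs
  exacts [⟨_, _, h₀, h₁, rfl⟩, ⟨_, _, h₁, h₀, rfl⟩]

theorem apply_sroot_nonneg_of_not_isRightDescent {w : W} {i : I}
    (hi : ¬ cs.IsRightDescent w i) : 0 ≤ ρ w (sroot i) := by
  induction hn : cs.length w using Nat.strong_induction_on generalizing w i with
  | _ n ih =>
  rcases eq_or_ne w 1 with rfl | hw
  · simpa using sroot_nonneg i
  obtain ⟨j, hj⟩ := cs.exists_rightDescent_of_ne_one hw
  have hij : i ≠ j := by
    rintro rfl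
    exact hi hj
  obtain ⟨v, k, hk, rfl, hlen, hvi, hvj⟩ :=
    cs.exists_eq_mul_alternatingWord_of_isRightDescent hj i
  have hkM : M i j = 0 ∨ k < M i j :=
    or_iff_not_imp_left.mpr (cs.lt_of_not_isRightDescent_mul_alternatingWord hlen hi)
  obtain ⟨a, b, ha, hb, hab⟩ := hgeom.exists_nonneg_apply_alternatingWord_sroot hij hkM
  rw [map_mul, Module.End.mul_apply, hab, map_add, map_smul, map_smul]
  exact add_nonneg (smul_nonneg ha (ih _ (by omega) hvi rfl))
    (smul_nonneg hb (ih _ (by omega) hvj rfl))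

theorem nonneg_or_nonpos_of_mem_Phi {β : I → ℝ} (hβ : β ∈ Phi ρ) :
    0 ≤ β ∨ β ≤ 0 := by
  obtain ⟨w, j, rfl⟩ := hβ
  by_cases hj : cs.IsRightDescent w j
  · have := hgeom.apply_sroot_nonneg_of_not_isRightDescent
      (cs.isRightDescent_iff_not_isRightDescent_mul.mp hj)
    rw [map_mul, Module.End.mul_apply, hgeom.simple_apply_sroot_self, map_neg, neg_nonneg] at this
    exact Or.inr this
  · exact Or.inl (hgeom.apply_sroot_nonneg_of_not_isRightDescent hj)

theorem sep_simple_mul_subset_iff (L : Set W) (u : W) (i : I) :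
    Sep ρ L (cs.simple i * u) ⊆ Sep ρ L u ↔ ρ u⁻¹ (sroot i) ∉ RL ρ L := by
  have hu : ∀ x, ρ u (ρ u⁻¹ x) = x := fun x => by
    rw [← Module.End.mul_apply, ← map_mul, mul_inv_cancel, map_one, Module.End.one_apply]
  constructor
  · intro hsub hR
    have hmem : ρ u⁻¹ (sroot i) ∈ Sep ρ L (cs.simple i * u) := by
      refine ⟨hR, ?_⟩
      rw [map_mul, Module.End.mul_apply, hu, hgeom.simple_apply_sroot_self]
      exact neg_nonpos.mpr (sroot_nonneg i)
    have := (hsub hmem).2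
    rw [hu] at this
    exact not_sroot_nonpos i this
  · rintro hR β ⟨hβ, hsβ⟩
    refine ⟨hβ, ?_⟩
    rw [map_mul, Module.End.mul_apply] at hsβ
    by_contra hnonpos
    have hpos := (hgeom.nonneg_or_nonpos_of_mem_Phi (apply_mem_Phi u hβ.1)).resolve_right
      hnonpos
    have hv := hgeom.eq_smul_sroot_of_nonneg_of_simple_apply_nonpos hpos hsβ
    have hvi : 0 < ρ u β i :=
      (hpos i).lt_of_ne fun h => hnonpos (by rw [hv, ← h, Pi.zero_apply, zero_smul])
    have hβ' : β = ρ u β i • ρ u⁻¹ (sroot i) := by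
      rw [← map_smul, ← hv, ← Module.End.mul_apply, ← map_mul, inv_mul_cancel, map_one,
        Module.End.one_apply]
    exact hR (mem_RL_of_pos_smul hvi ⟨u⁻¹, i, rfl⟩ (hβ' ▸ hβ))

end IsGeometric

end BKBilliards

theorem sep_toggle_subset_general
    {I : Type*} [DecidableEq I] {M : CoxeterMatrix I} {W : Type*} [Group W]
    (cs : CoxeterSystem M W) (ρ : Representation ℝ W (I → ℝ))
    (B : LinearMap.BilinForm ℝ (I → ℝ)) (hgeom : IsGeometric cs ρ B)
    (L : Set W)
    (u : W) (i : I) :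
    Sep ρ L (toggle ρ cs L i u) ⊆ Sep ρ L u ∧
    (Sep ρ L (cs.simple i * u) ⊆ Sep ρ L u → toggle ρ cs L i u = cs.simple i * u) ∧
    (¬ Sep ρ L (cs.simple i * u) ⊆ Sep ρ L u → toggle ρ cs L i u = u) := by
  have hiff := hgeom.sep_simple_mul_subset_iff L u i
  by_cases hR : ρ u⁻¹ (sroot i) ∈ RL ρ L
  · have ht : toggle ρ cs L i u = u := if_pos hR
    exact ⟨by rw [ht], fun h => absurd hR (hiff.mp h), fun _ => ht⟩
  · have ht : toggle ρ cs L i u = cs.simple i * u := if_neg hR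
    exact ⟨ht ▸ hiff.mpr hR, fun _ => ht, fun h => absurd (hiff.mpr hR) h⟩

/-- `Sep(τᵢ(u)) ⊆ Sep(u)`; moreover `τᵢ(u) = sᵢu` if `Sep(sᵢu) ⊆ Sep(u)`
and `τᵢ(u) = u` otherwise. -/
theorem sep_toggle_subset
    {I : Type*} [Fintype I] [DecidableEq I] {M : CoxeterMatrix I} {W : Type*} [Group W]
    (cs : CoxeterSystem M W) (ρ : Representation ℝ W (I → ℝ))
    (B : LinearMap.BilinForm ℝ (I → ℝ)) (hgeom : IsGeometric cs ρ B)
    (L : Set W) (hL : L.Nonempty) (hconv : IsConvex ρ L)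
    (u : W) (i : I) :
    Sep ρ L (toggle ρ cs L i u) ⊆ Sep ρ L u ∧
    (Sep ρ L (cs.simple i * u) ⊆ Sep ρ L u → toggle ρ cs L i u = cs.simple i * u) ∧
    (¬ Sep ρ L (cs.simple i * u) ⊆ Sep ρ L u → toggle ρ cs L i u = u) :=
  sep_toggle_subset_general cs ρ B hgeom L u i
end
end

section
/- Let 𝓛 be a nonempty convex subset of a Coxeter group W. For every u ∈ W and every w ∈ 𝓛, the set Sep(u) of separators of u satisfies |Sep(u)| ≤ ℓ(u w^{-1}); in particular Sep(u) is finite. -/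
open scoped Classical

noncomputable section

set_option linter.unusedSectionVars false
set_option linter.unusedVariables false

namespace SepAux

open BKBilliards CoxeterSystem

variable {I : Type*} [Fintype I] [DecidableEq I] {M : CoxeterMatrix I} {W : Type*} [Group W]
variable {cs : CoxeterSystem M W} {ρ : Representation ℝ W (I → ℝ)}
  {B : LinearMap.BilinForm ℝ (I → ℝ)}

lemma sroot_nonneg (i : I) : (0 : I → ℝ) ≤ sroot i := by
  intro k
  by_cases h : k = i <;> simp [sroot, Pi.single_apply, h]

lemma sroot_ne_zero (i : I) : sroot i ≠ (0 : I → ℝ) := by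
  intro h
  have := congrFun h i
  simp [sroot] at this

lemma eq_sum_sroot (x : I → ℝ) : x = ∑ k, x k • sroot k := by
  funext l
  rw [Finset.sum_apply]
  simp [sroot, Pi.single_apply]

lemma bilin_single_symm (hg : IsGeometric cs ρ B) (k l : I) :
    B (sroot k) (sroot l) = B (sroot l) (sroot k) := by
  have hsym : M.M l k = M.M k l := congrFun (congrFun M.isSymm k) l
  by_cases h : M.M k l = 0
  · rw [hg.form_apply_of_eq_zero k l h, hg.form_apply_of_eq_zero l k (by rw [hsym]; exact h)]
  · rw [hg.form_apply_of_ne_zero k l h, hg.form_apply_of_ne_zero l k (by rw [hsym]; exact h)]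
    rw [congrArg (Nat.cast : ℕ → ℝ) hsym]

lemma bilin_symm (hg : IsGeometric cs ρ B) (x y : I → ℝ) : B x y = B y x := by
  rw [eq_sum_sroot x, eq_sum_sroot y]
  simp only [map_sum, map_smul, LinearMap.sum_apply, LinearMap.smul_apply, smul_eq_mul]
  simp only [Finset.mul_sum]
  rw [Finset.sum_comm]
  exact Finset.sum_congr rfl fun k _ => Finset.sum_congr rfl fun l _ => by
    rw [bilin_single_symm hg]; ring

lemma bilin_sroot_self (hg : IsGeometric cs ρ B) (i : I) : B (sroot i) (sroot i) = 1 := by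
  have h1 : M.M i i = 1 := M.diagonal i
  rw [hg.form_apply_of_ne_zero i i (by rw [h1]; norm_num), h1]
  simp

lemma rho_simple_sroot (hg : IsGeometric cs ρ B) (i : I) :
    ρ (cs.simple i) (sroot i) = - sroot i := by
  rw [hg.simple_apply, bilin_sroot_self hg, mul_one, two_smul]
  abel

lemma bilin_rho_simple (hg : IsGeometric cs ρ B) (i : I) (x y : I → ℝ) :
    B (ρ (cs.simple i) x) (ρ (cs.simple i) y) = B x y := by
  rw [hg.simple_apply, hg.simple_apply]
  simp only [map_sub, map_smul, LinearMap.sub_apply, LinearMap.smul_apply, smul_eq_mul]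
  rw [bilin_sroot_self hg, bilin_symm hg (sroot i) y]
  ring

lemma bilin_rho (hg : IsGeometric cs ρ B) (w : W) :
    ∀ x y, B (ρ w x) (ρ w y) = B x y := by
  refine cs.simple_induction_left (p := fun w => ∀ x y, (B (ρ w x)) (ρ w y) = B x y) w ?_ ?_
  · simp
  · intro w i ih x y
    rw [map_mul, Module.End.mul_apply, Module.End.mul_apply, bilin_rho_simple hg, ih]

lemma rho_leftinv (w : W) (x : I → ℝ) : ρ w⁻¹ (ρ w x) = x := by
  rw [← Module.End.mul_apply, ← map_mul, inv_mul_cancel, map_one, Module.End.one_apply]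

lemma rho_injective (w : W) : Function.Injective (ρ w) :=
  Function.LeftInverse.injective (g := ρ w⁻¹) (fun x => rho_leftinv w x)

lemma root_ne_zero {γ : I → ℝ} (hγ : γ ∈ Phi ρ) : γ ≠ 0 := by
  obtain ⟨w, i, rfl⟩ := hγ
  intro h
  have := congrArg (ρ w⁻¹) h
  rw [rho_leftinv, map_zero] at this
  exact sroot_ne_zero i this

lemma root_map {γ : I → ℝ} (w : W) (hγ : γ ∈ Phi ρ) : ρ w γ ∈ Phi ρ := by
  obtain ⟨w', i, rfl⟩ := hγ
  exact ⟨w * w', i, by rw [map_mul, Module.End.mul_apply]⟩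

lemma root_bilin_self (hg : IsGeometric cs ρ B) {γ : I → ℝ} (hγ : γ ∈ Phi ρ) : B γ γ = 1 := by
  obtain ⟨w, i, rfl⟩ := hγ
  rw [bilin_rho hg, bilin_sroot_self hg]

noncomputable def useq (kk : ℝ) : ℕ → ℝ
  | 0 => 0
  | 1 => 1
  | (n+2) => kk * useq kk (n+1) - useq kk n

lemma useq_zero (kk : ℝ) : useq kk 0 = 0 := rfl
lemma useq_one (kk : ℝ) : useq kk 1 = 1 := rfl
lemma useq_add_two (kk : ℝ) (n : ℕ) : useq kk (n+2) = kk * useq kk (n+1) - useq kk n := rfl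

lemma useq_sin (t : ℝ) : ∀ n : ℕ, useq (2 * Real.cos t) n * Real.sin t = Real.sin (n * t) := by
  intro n
  induction n using Nat.strong_induction_on with
  | _ n ih =>
    match n with
    | 0 => simp [useq_zero]
    | 1 => simp [useq_one]
    | (n+2) =>
      have h1 := ih (n+1) (by omega)
      have h0 := ih n (by omega)
      rw [useq_add_two]
      push_cast
      rw [show ((n:ℝ)+2) * t = (((n:ℝ)+1) * t) + t by ring, Real.sin_add]
      rw [show ((n:ℝ)) * t = (((n:ℝ)+1) * t) - t by ring, Real.sin_sub] at h0
      push_cast at h1 h0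
      linear_combination (2 * Real.cos t) * h1 - h0

lemma useq_two : ∀ n : ℕ, useq 2 n = n := by
  intro n
  induction n using Nat.strong_induction_on with
  | _ n ih =>
    match n with
    | 0 => simp [useq_zero]
    | 1 => simp [useq_one]
    | (n+2) =>
      have h1 := ih (n+1) (by omega)
      have h0 := ih n (by omega)
      rw [useq_add_two, h1, h0]
      push_cast
      ring

variable {i j : I}

lemma rho_alt_sroot (hg : IsGeometric cs ρ B) (hij : i ≠ j) (n : ℕ) :
    ρ (cs.wordProd (alternatingWord i j n)) (sroot i) =
      if Even n then
        useq (-(2 * B (sroot i) (sroot j))) (n+1) • sroot i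
          + useq (-(2 * B (sroot i) (sroot j))) n • sroot j
      else
        useq (-(2 * B (sroot i) (sroot j))) n • sroot i
          + useq (-(2 * B (sroot i) (sroot j))) (n+1) • sroot j := by
  set kk := -(2 * B (sroot i) (sroot j)) with hkk
  induction n with
  | zero =>
    simp only [alternatingWord, wordProd_nil, map_one, Module.End.one_apply, if_pos (Even.zero),
      zero_add, useq_zero, useq_one, one_smul, zero_smul, add_zero]
  | succ n ih =>
    rw [alternatingWord_succ', wordProd_cons, map_mul, Module.End.mul_apply, ih]
    by_cases hn : Even n
    · have hn1 : ¬ Even (n+1) := by simp [Nat.even_add_one, hn]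
      simp only [if_pos hn, if_neg hn1]
      rw [hg.simple_apply]
      have hB : (B (useq kk (n+1) • sroot i + useq kk n • sroot j)) (sroot j)
          = useq kk (n+1) * (B (sroot i)) (sroot j) + useq kk n := by
        simp only [map_add, map_smul, LinearMap.add_apply, LinearMap.smul_apply, smul_eq_mul,
          bilin_sroot_self hg]
        ring
      rw [hB, useq_add_two, hkk]
      funext k
      simp only [Pi.add_apply, Pi.sub_apply, Pi.smul_apply, smul_eq_mul]
      ring
    · have hn1 : Even (n+1) := Nat.even_add_one.mpr hn
      simp only [if_neg hn, if_pos hn1]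
      rw [hg.simple_apply]
      have hB : (B (useq kk n • sroot i + useq kk (n+1) • sroot j)) (sroot i)
          = useq kk n + useq kk (n+1) * (B (sroot i)) (sroot j) := by
        simp only [map_add, map_smul, LinearMap.add_apply, LinearMap.smul_apply, smul_eq_mul,
          bilin_sroot_self hg]
        rw [bilin_single_symm hg j i]
        ring
      rw [hB, useq_add_two, hkk]
      funext k
      simp only [Pi.add_apply, Pi.sub_apply, Pi.smul_apply, smul_eq_mul]
      ring

lemma useq_kappa_nonneg (hg : IsGeometric cs ρ B) (hij : i ≠ j) {n : ℕ}
    (hn : M.M i j = 0 ∨ n ≤ M.M i j) :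
    0 ≤ useq (-(2 * B (sroot i) (sroot j))) n := by
  by_cases h0 : M.M i j = 0
  · rw [hg.form_apply_of_eq_zero i j h0, show (-(2 * (-1:ℝ))) = 2 by norm_num, useq_two]
    exact Nat.cast_nonneg n
  · have hm1 : M.M i j ≠ 1 := M.off_diagonal i j hij
    have hm2 : 2 ≤ M.M i j := by omega
    have hmn : n ≤ M.M i j := hn.resolve_left h0
    have hmpos : (0:ℝ) < (M.M i j : ℝ) := by exact_mod_cast Nat.pos_of_ne_zero h0
    set t := Real.pi / (M.M i j : ℝ) with ht
    have htpos : 0 < t := div_pos Real.pi_pos hmpos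
    have htlt : t < Real.pi := by
      rw [ht]
      apply div_lt_self Real.pi_pos
      exact_mod_cast hm2.trans_lt' one_lt_two
    have hsin : 0 < Real.sin t := Real.sin_pos_of_pos_of_lt_pi htpos htlt
    have hκ : -(2 * (B (sroot i)) (sroot j)) = 2 * Real.cos t := by
      rw [hg.form_apply_of_ne_zero i j h0]; ring
    rw [hκ]
    have h1 := useq_sin t n
    have h2 : 0 ≤ Real.sin (n * t) := by
      apply Real.sin_nonneg_of_nonneg_of_le_pi
      · positivity
      · calc (n:ℝ) * t ≤ (M.M i j : ℝ) * t := by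
              apply mul_le_mul_of_nonneg_right _ htpos.le
              exact_mod_cast hmn
          _ = Real.pi := by rw [ht, mul_comm, div_mul_cancel₀ _ (ne_of_gt hmpos)]
    by_contra hcon
    push_neg at hcon
    have := mul_neg_of_neg_of_pos hcon hsin
    rw [h1] at this
    linarith

lemma rho_alt_sroot_nonneg (hg : IsGeometric cs ρ B) (hij : i ≠ j) (n : ℕ)
    (hn : M.M i j = 0 ∨ n < M.M i j) :
    ∃ a b : ℝ, 0 ≤ a ∧ 0 ≤ b ∧
      ρ (cs.wordProd (alternatingWord i j n)) (sroot i) = a • sroot i + b • sroot j := by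
  have h1 : 0 ≤ useq (-(2 * (B (sroot i)) (sroot j))) n :=
    useq_kappa_nonneg hg hij (hn.imp id Nat.le_of_lt)
  have h2 : 0 ≤ useq (-(2 * (B (sroot i)) (sroot j))) (n+1) :=
    useq_kappa_nonneg hg hij (hn.imp id (fun h => h))
  rcases em (Even n) with he | he
  · exact ⟨_, _, h2, h1, by rw [rho_alt_sroot hg hij n, if_pos he]⟩
  · exact ⟨_, _, h1, h2, by rw [rho_alt_sroot hg hij n, if_neg he]⟩

lemma reduced_word_ij (hij : i ≠ j) : ∀ l : List I, cs.IsReduced l →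
    (∀ x ∈ l, x = i ∨ x = j) →
    l = alternatingWord i j l.length ∨ l = alternatingWord j i l.length := by
  intro l
  induction l using List.reverseRecOn with
  | nil => intro _ _; left; rfl
  | append_singleton l a ih =>
    intro hred hmem
    have hl : cs.IsReduced l := by
      have h := hred.take l.length
      rwa [List.take_left] at h
    have hmem' : ∀ x ∈ l, x = i ∨ x = j := fun x hx => hmem x (by simp [hx])
    have ha := hmem a (by simp)
    have hlen : (l ++ [a]).length = l.length + 1 := by simp
    rcases Nat.eq_zero_or_pos l.length with h0 | hpos
    · have hl0 : l = [] := List.length_eq_zero_iff.mp h0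
      subst hl0
      rcases ha with rfl | rfl
      · right; simp [alternatingWord]
      · left; simp [alternatingWord]
    · obtain ⟨k, hk⟩ : ∃ k, l.length = k + 1 := ⟨l.length - 1, by omega⟩
      rcases ih hl hmem' with h | h
      · obtain ha1 | ha1 := ha
        · right
          rw [ha1]
          have hlen2 : (l ++ [i]).length = (k + 1) + 1 := by simp [hk]
          rw [hlen2, alternatingWord_succ j i, ← hk, ← h, List.concat_eq_append]
        · exfalso
          have h1 : cs.wordProd (l ++ [a]) = cs.wordProd l * cs.simple j := by
            rw [wordProd_append, wordProd_singleton, ha1]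
          have h2 : cs.wordProd l = cs.wordProd (alternatingWord j i k) * cs.simple j := by
            conv_lhs => rw [h, hk, alternatingWord_succ i j, wordProd_concat]
          have h3 : cs.wordProd (l ++ [a]) = cs.wordProd (alternatingWord j i k) := by
            rw [h1, h2, cs.simple_mul_simple_cancel_right]
          have h4 := cs.length_wordProd_le (alternatingWord j i k)
          rw [length_alternatingWord] at h4
          have h5 : cs.length (cs.wordProd (l ++ [a])) = l.length + 1 := by
            rw [hred, hlen]
          rw [h3] at h5
          omega
      · obtain ha1 | ha1 := ha
        · exfalso
          have h1 : cs.wordProd (l ++ [a]) = cs.wordProd l * cs.simple i := by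
            rw [wordProd_append, wordProd_singleton, ha1]
          have h2 : cs.wordProd l = cs.wordProd (alternatingWord i j k) * cs.simple i := by
            conv_lhs => rw [h, hk, alternatingWord_succ j i, wordProd_concat]
          have h3 : cs.wordProd (l ++ [a]) = cs.wordProd (alternatingWord i j k) := by
            rw [h1, h2, cs.simple_mul_simple_cancel_right]
          have h4 := cs.length_wordProd_le (alternatingWord i j k)
          rw [length_alternatingWord] at h4
          have h5 : cs.length (cs.wordProd (l ++ [a])) = l.length + 1 := by
            rw [hred, hlen]
          rw [h3] at h5
          omega
        · left
          rw [ha1]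
          have hlen2 : (l ++ [j]).length = (k + 1) + 1 := by simp [hk]
          rw [hlen2, alternatingWord_succ i j, ← hk, ← h, List.concat_eq_append]

theorem pos_of_not_isRightDescent (hg : IsGeometric cs ρ B) :
    ∀ w : W, ∀ i : I, ¬ cs.IsRightDescent w i → 0 ≤ ρ w (sroot i) := by
  suffices h : ∀ n : ℕ, ∀ w : W, cs.length w = n → ∀ i : I, ¬ cs.IsRightDescent w i →
      0 ≤ ρ w (sroot i) from fun w i hw => h (cs.length w) w rfl i hw
  intro n
  induction n using Nat.strong_induction_on with
  | _ n ih =>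
  intro w hw i hi
  rcases eq_or_ne w 1 with rfl | hne
  · rw [map_one, Module.End.one_apply]; exact sroot_nonneg i
  obtain ⟨j, hj⟩ := cs.exists_rightDescent_of_ne_one hne
  have hij : i ≠ j := fun h => hi (h ▸ hj)
  have hP0 : ∃ k, ∃ (v : W) (l : List I), cs.length v = k ∧ (∀ x ∈ l, x = i ∨ x = j) ∧
      w = v * cs.wordProd l ∧ cs.length w = cs.length v + l.length := by
    refine ⟨cs.length (w * cs.simple j), w * cs.simple j, [j], rfl, by simp, ?_, ?_⟩
    · rw [wordProd_singleton, cs.simple_mul_simple_cancel_right]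
    · have hjj : cs.length (w * cs.simple j) + 1 = cs.length w := by
        rcases cs.length_mul_simple w j with h | h
        · exact absurd hj (by unfold CoxeterSystem.IsRightDescent; omega)
        · exact h
      simp only [List.length_singleton]
      omega
  obtain ⟨v, l, hv, hmem, hwvl, hlen⟩ := Nat.find_spec hP0
  have hvd : ∀ x : I, (x = i ∨ x = j) → ¬ cs.IsRightDescent v x := by
    intro x hx hdes
    have hlv : cs.length (v * cs.simple x) + 1 = cs.length v := by
      rcases cs.length_mul_simple v x with h | h
      · exact absurd hdes (by unfold CoxeterSystem.IsRightDescent; omega)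
      · exact h
    have hPnew : ∃ (v' : W) (l' : List I), cs.length v' = cs.length v - 1 ∧
        (∀ y ∈ l', y = i ∨ y = j) ∧ w = v' * cs.wordProd l' ∧
        cs.length w = cs.length v' + l'.length := by
      refine ⟨v * cs.simple x, x :: l, by omega, ?_, ?_, ?_⟩
      · intro y hy
        rcases List.mem_cons.mp hy with rfl | hy
        · exact hx
        · exact hmem y hy
      · rw [wordProd_cons, mul_assoc, cs.simple_mul_simple_cancel_left]
        exact hwvl
      · simp only [List.length_cons]
        omega
    have hlt : cs.length v - 1 < Nat.find hP0 := by omega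
    exact Nat.find_min hP0 hlt hPnew
  have hvi : ¬ cs.IsRightDescent v i := hvd i (Or.inl rfl)
  have hvj : ¬ cs.IsRightDescent v j := hvd j (Or.inr rfl)
  have hl1 : 1 ≤ l.length := by
    rcases Nat.eq_zero_or_pos l.length with h0 | h
    · exfalso
      have hnil : l = [] := List.length_eq_zero_iff.mp h0
      subst hnil
      rw [wordProd_nil, mul_one] at hwvl
      subst hwvl
      exact hvj hj
    · exact h
  have hvw : cs.length v < cs.length w := by omega
  have hred : cs.IsReduced l := by
    have h1 := cs.length_mul_le v (cs.wordProd l)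
    have h2 := cs.length_wordProd_le l
    rw [← hwvl] at h1
    unfold CoxeterSystem.IsReduced
    omega
  have hend : ∀ k : ℕ, cs.wordProd l = cs.wordProd (alternatingWord j i (k+1)) →
      k + 1 ≤ l.length → False := by
    intro k hkeq hkle
    have h1 : w * cs.simple i = v * cs.wordProd (alternatingWord i j k) := by
      rw [hwvl, hkeq, alternatingWord_succ j i, wordProd_concat, ← mul_assoc,
        cs.simple_mul_simple_cancel_right]
    have h2 : cs.length (w * cs.simple i) ≤ cs.length v + k := by
      calc cs.length (w * cs.simple i)
          = cs.length (v * cs.wordProd (alternatingWord i j k)) := by rw [h1]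
        _ ≤ cs.length v + cs.length (cs.wordProd (alternatingWord i j k)) :=
            cs.length_mul_le _ _
        _ ≤ cs.length v + k := by
            have := cs.length_wordProd_le (alternatingWord i j k)
            rw [length_alternatingWord] at this
            omega
    exact hi (by unfold CoxeterSystem.IsRightDescent; omega)
  rcases reduced_word_ij (cs := cs) hij l hred hmem with hf | hf
  swap
  · exfalso
    obtain ⟨k, hk⟩ : ∃ k, l.length = k + 1 := ⟨l.length - 1, by omega⟩
    have hc := congrArg cs.wordProd hf
    rw [hk] at hc
    exact hend k hc (by omega)
  have hmn : M.M i j = 0 ∨ l.length < M.M i j := by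
    by_cases h0 : M.M i j = 0
    · exact Or.inl h0
    right
    by_contra hge
    push_neg at hge
    rcases lt_or_eq_of_le hge with hgt | heq
    · exact cs.not_isReduced_alternatingWord i j h0 hgt (hf ▸ hred)
    · exfalso
      obtain ⟨k, hk⟩ : ∃ k, l.length = k + 1 := ⟨l.length - 1, by omega⟩
      have hb : cs.wordProd l = cs.wordProd (alternatingWord j i (k+1)) := by
        have hsym : M.M j i = M.M i j := congrFun (congrFun M.isSymm i) j
        have h3 := cs.wordProd_braidWord_eq i j
        rw [show braidWord M i j = alternatingWord i j (M.M i j) from rfl,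
          show braidWord M j i = alternatingWord j i (M.M j i) from rfl, hsym, heq, hk] at h3
        have h1 := congrArg cs.wordProd hf
        rw [hk] at h1
        exact h1.trans h3
      exact hend k hb (by omega)
  obtain ⟨a, b, ha, hb, hab⟩ := rho_alt_sroot_nonneg (i := i) (j := j) hg hij l.length hmn
  have hvipos := ih (cs.length v) (by omega) v rfl i hvi
  have hvjpos := ih (cs.length v) (by omega) v rfl j hvj
  have hπ : cs.wordProd l = cs.wordProd (alternatingWord i j l.length) :=
    congrArg cs.wordProd hf
  rw [hwvl, map_mul, Module.End.mul_apply, hπ, hab, map_add, map_smul, map_smul]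
  intro k
  simp only [Pi.add_apply, Pi.smul_apply, smul_eq_mul, Pi.zero_apply]
  have hik := hvipos k
  have hjk := hvjpos k
  have h1 : (0:ℝ) ≤ a * ρ v (sroot i) k := mul_nonneg ha hik
  have h2 : (0:ℝ) ≤ b * ρ v (sroot j) k := mul_nonneg hb hjk
  linarith


lemma neg_of_isRightDescent (hg : IsGeometric cs ρ B) (w : W) (i : I)
    (h : cs.IsRightDescent w i) : ρ w (sroot i) ≤ 0 := by
  have h2 : ¬ cs.IsRightDescent (w * cs.simple i) i :=
    cs.isRightDescent_iff_not_isRightDescent_mul.mp h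
  have h3 := pos_of_not_isRightDescent hg (w * cs.simple i) i h2
  have heq : ρ w (sroot i) = - ρ (w * cs.simple i) (sroot i) := by
    rw [map_mul, Module.End.mul_apply, rho_simple_sroot hg, map_neg, neg_neg]
  rw [heq]
  exact neg_nonpos.mpr h3

lemma root_dichotomy (hg : IsGeometric cs ρ B) {γ : I → ℝ} (hγ : γ ∈ Phi ρ) :
    0 ≤ γ ∨ γ ≤ 0 := by
  obtain ⟨w, i, rfl⟩ := hγ
  by_cases h : cs.IsRightDescent w i
  · exact Or.inr (neg_of_isRightDescent hg w i h)
  · exact Or.inl (pos_of_not_isRightDescent hg w i h)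

lemma eq_sroot_of_simple_neg (hg : IsGeometric cs ρ B) {γ : I → ℝ} (hγ : γ ∈ Phi ρ)
    (hpos : 0 ≤ γ) (i : I) (hneg : ¬ 0 ≤ ρ (cs.simple i) γ) : γ = sroot i := by
  have hmem : ρ (cs.simple i) γ ∈ Phi ρ := root_map _ hγ
  have hle : ρ (cs.simple i) γ ≤ 0 := (root_dichotomy hg hmem).resolve_left hneg
  have hco : ∀ k, k ≠ i → γ k = 0 := by
    intro k hk
    have h1 : (ρ (cs.simple i) γ) k = γ k := by
      rw [hg.simple_apply]
      simp [sroot, Pi.single_apply, Ne.symm hk]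
    have h2 := hle k
    have h3 := hpos k
    rw [h1] at h2
    exact le_antisymm h2 h3
  have hγi : γ = γ i • sroot i := by
    funext k
    by_cases hk : k = i
    · subst hk; simp [sroot]
    · simp [sroot, Pi.single_apply, hk, hco k hk]
  have hB := root_bilin_self hg hγ
  rw [hγi] at hB
  simp only [map_smul, LinearMap.smul_apply, smul_eq_mul, bilin_sroot_self hg] at hB
  have h0 : (γ i - 1) * (γ i + 1) = 0 := by linear_combination hB
  rcases mul_eq_zero.mp h0 with h1 | h1
  · have h2 : γ i = 1 := by linarith only [h1]
    rw [hγi, h2, one_smul]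
  · exfalso
    have h2 : (0:ℝ) ≤ γ i := hpos i
    linarith only [h1, h2]

lemma inv_count (hg : IsGeometric cs ρ B) : ∀ n : ℕ, ∀ v : W, cs.length v = n →
    ({γ | γ ∈ Phi ρ ∧ 0 ≤ γ ∧ ρ v γ ≤ 0}).Finite ∧
    ({γ | γ ∈ Phi ρ ∧ 0 ≤ γ ∧ ρ v γ ≤ 0}).ncard ≤ n := by
  intro n
  induction n with
  | zero =>
    intro v hv
    have hv1 : v = 1 := cs.length_eq_zero_iff.mp hv
    subst hv1
    have he : {γ | γ ∈ Phi ρ ∧ 0 ≤ γ ∧ ρ (1:W) γ ≤ 0} = ∅ := by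
      ext γ
      constructor
      · rintro ⟨hγ, hpos, hneg⟩
        rw [map_one, Module.End.one_apply] at hneg
        exact absurd (le_antisymm hneg hpos) (root_ne_zero hγ)
      · exact fun h => h.elim
    rw [he]
    exact ⟨Set.finite_empty, by simp⟩
  | succ n ihn =>
    intro v hv
    have hne : v ≠ 1 := by
      intro h
      rw [h, cs.length_one] at hv
      omega
    obtain ⟨i, hi⟩ := cs.exists_leftDescent_of_ne_one hne
    have hv' : cs.length (cs.simple i * v) = n := by
      rcases cs.length_simple_mul v i with h | h
      · exfalso
        have h2 := hi
        unfold CoxeterSystem.IsLeftDescent at h2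
        omega
      · omega
    obtain ⟨hFin, hcard⟩ := ihn (cs.simple i * v) hv'
    have hvv : ∀ γ : I → ℝ, ρ v γ = ρ (cs.simple i) (ρ (cs.simple i * v) γ) := by
      intro γ
      rw [← Module.End.mul_apply, ← map_mul, cs.simple_mul_simple_cancel_left]
    have hsub : {γ | γ ∈ Phi ρ ∧ 0 ≤ γ ∧ ρ v γ ≤ 0} ⊆
        insert (ρ (cs.simple i * v)⁻¹ (sroot i))
          {γ | γ ∈ Phi ρ ∧ 0 ≤ γ ∧ ρ (cs.simple i * v) γ ≤ 0} := by
      rintro γ ⟨hγ, hpos, hneg⟩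
      rcases root_dichotomy hg (root_map (cs.simple i * v) hγ) with hp | hn
      · have hne0 : ¬ (0 ≤ ρ (cs.simple i) (ρ (cs.simple i * v) γ)) := by
          intro hge
          rw [← hvv γ] at hge
          exact root_ne_zero (root_map v hγ) (le_antisymm hneg hge)
        have heq := eq_sroot_of_simple_neg hg (root_map (cs.simple i * v) hγ) hp i hne0
        have h3 := congrArg (ρ (cs.simple i * v)⁻¹) heq
        rw [rho_leftinv] at h3
        exact Set.mem_insert_iff.mpr (Or.inl h3)
      · exact Set.mem_insert_of_mem _ ⟨hγ, hpos, hn⟩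
    refine ⟨(hFin.insert _).subset hsub, ?_⟩
    calc ({γ | γ ∈ Phi ρ ∧ 0 ≤ γ ∧ ρ v γ ≤ 0}).ncard
        ≤ (insert (ρ (cs.simple i * v)⁻¹ (sroot i))
            {γ | γ ∈ Phi ρ ∧ 0 ≤ γ ∧ ρ (cs.simple i * v) γ ≤ 0}).ncard :=
          Set.ncard_le_ncard hsub (hFin.insert _)
      _ ≤ ({γ | γ ∈ Phi ρ ∧ 0 ≤ γ ∧ ρ (cs.simple i * v) γ ≤ 0}).ncard + 1 :=
          Set.ncard_insert_le _ _
      _ ≤ n + 1 := by omega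

end SepAux



open BKBilliards

/-- For `u ∈ W` and `w ∈ 𝓛`, the set of separators of `u` is finite,
with `|Sep(u)| ≤ ℓ(u w⁻¹)`. -/
theorem sep_finite
    {I : Type*} [Fintype I] [DecidableEq I] {M : CoxeterMatrix I} {W : Type*} [Group W]
    (cs : CoxeterSystem M W) (ρ : Representation ℝ W (I → ℝ))
    (B : LinearMap.BilinForm ℝ (I → ℝ)) (hgeom : IsGeometric cs ρ B)
    (L : Set W) (hL : L.Nonempty) (hconv : IsConvex ρ L)
    (u : W) (w : W) (hw : w ∈ L) :
    (Sep ρ L u).Finite ∧ (Sep ρ L u).ncard ≤ cs.length (u * w⁻¹) := by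
  obtain ⟨hTfin, hTcard⟩ := SepAux.inv_count hgeom (cs.length (u * w⁻¹)) (u * w⁻¹) rfl
  have hsub : Sep ρ L u ⊆ (ρ w) ⁻¹'
      {γ | γ ∈ Phi ρ ∧ 0 ≤ γ ∧ ρ (u * w⁻¹) γ ≤ 0} := by
    rintro β ⟨⟨hβPhi, hβL⟩, hβu⟩
    have h1 : ρ (u * w⁻¹) (ρ w β) = ρ u β := by
      rw [← Module.End.mul_apply, ← map_mul, inv_mul_cancel_right]
    refine ⟨SepAux.root_map w hβPhi, hβL w hw, ?_⟩
    rw [h1]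
    exact hβu
  have hinj : Function.Injective (ρ w) := SepAux.rho_injective (ρ := ρ) w
  have hfin : (Sep ρ L u).Finite := (hTfin.preimage hinj.injOn).subset hsub
  refine ⟨hfin, ?_⟩
  calc (Sep ρ L u).ncard
      = ((ρ w) '' (Sep ρ L u)).ncard := (Set.ncard_image_of_injective _ hinj).symm
    _ ≤ ({γ | γ ∈ Phi ρ ∧ 0 ≤ γ ∧ ρ (u * w⁻¹) γ ≤ 0}).ncard :=
        Set.ncard_le_ncard (Set.image_subset_iff.mpr hsub) hTfin
    _ ≤ cs.length (u * w⁻¹) := hTcard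
end
end

section
/- Let 𝓛 be a nonempty convex subset of a Coxeter group W, let w ∈ W, and let 𝗐 be a reduced word for w. Then for all u ∈ W, Sep(τ_𝗐(u)) ⊆ Sep(w^{-1} τ_𝗐(u)), where τ_𝗐 denotes the composition of the noninvertible Bender–Knuth toggles along 𝗐. -/
open scoped Classical

noncomputable section

open BKBilliards


set_option linter.unusedSectionVars false
set_option maxHeartbeats 800000

namespace BKAux
open BKBilliards CoxeterSystem

variable {I : Type*} [Fintype I] [DecidableEq I] {M : CoxeterMatrix I} {W : Type*} [Group W]
variable {cs : CoxeterSystem M W} {ρ : Representation ℝ W (I → ℝ)}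
variable {B : LinearMap.BilinForm ℝ (I → ℝ)}

lemma sroot_nonneg (i : I) : (0 : I → ℝ) ≤ sroot i := by
  intro j; by_cases h : i = j <;> simp [sroot, Pi.single_apply, h]

lemma sum_smul_sroot (y : I → ℝ) : ∑ j, y j • sroot j = y := by
  funext r
  rw [Finset.sum_apply, Finset.sum_eq_single r]
  · simp [sroot]
  · intro b _ hb; simp [sroot, Pi.single_apply, hb]
  · simp

lemma entry_symm (hg : IsGeometric cs ρ B) (i j : I) :
    B (sroot i) (sroot j) = B (sroot j) (sroot i) := by
  by_cases h : M i j = 0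
  · rw [hg.form_apply_of_eq_zero i j h, hg.form_apply_of_eq_zero j i (by rw [M.isSymm.apply]; exact h)]
  · rw [hg.form_apply_of_ne_zero i j h, hg.form_apply_of_ne_zero j i (by rw [M.isSymm.apply]; exact h),
      M.isSymm.apply]

lemma B_sroot_self (hg : IsGeometric cs ρ B) (i : I) : B (sroot i) (sroot i) = 1 := by
  rw [hg.form_apply_of_ne_zero i i (by rw [M.diagonal]; norm_num), M.diagonal]
  norm_num

lemma B_sroot_comm (hg : IsGeometric cs ρ B) (i : I) (y : I → ℝ) :
    B (sroot i) y = B y (sroot i) := by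
  conv_lhs => rw [← sum_smul_sroot y]
  conv_rhs => rw [← sum_smul_sroot y]
  rw [map_sum B, LinearMap.sum_apply, map_sum]
  refine Finset.sum_congr rfl fun j _ => ?_
  rw [map_smul, map_smul, LinearMap.smul_apply, smul_eq_mul, smul_eq_mul, entry_symm hg]

lemma B_simple_inv (hg : IsGeometric cs ρ B) (i : I) (x y : I → ℝ) :
    B (ρ (cs.simple i) x) (ρ (cs.simple i) y) = B x y := by
  rw [hg.simple_apply, hg.simple_apply]
  simp only [map_sub, map_smul, LinearMap.sub_apply, LinearMap.smul_apply, smul_eq_mul]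
  rw [B_sroot_self hg, B_sroot_comm hg i y]
  ring

lemma B_rho_inv (hg : IsGeometric cs ρ B) (w : W) :
    ∀ x y, B (ρ w x) (ρ w y) = B x y := by
  induction w using CoxeterSystem.simple_induction_left cs with
  | one => simp
  | mul_simple_left w i h =>
      intro x y
      rw [map_mul, Module.End.mul_apply, Module.End.mul_apply, B_simple_inv hg, h]

lemma rho_inv_cancel (w : W) (x : I → ℝ) : ρ w⁻¹ (ρ w x) = x := by
  rw [← Module.End.mul_apply, ← map_mul, inv_mul_cancel, map_one, Module.End.one_apply]

lemma rho_cancel_inv (w : W) (x : I → ℝ) : ρ w (ρ w⁻¹ x) = x := by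
  rw [← Module.End.mul_apply, ← map_mul, mul_inv_cancel, map_one, Module.End.one_apply]

lemma rho_mul_apply (a b : W) (x : I → ℝ) : ρ (a * b) x = ρ a (ρ b x) := by
  rw [map_mul, Module.End.mul_apply]

lemma Phi_rho_mem (g : W) {β : I → ℝ} (hβ : β ∈ Phi ρ) : ρ g β ∈ Phi ρ := by
  obtain ⟨z, r, rfl⟩ := hβ
  exact ⟨g * z, r, by rw [rho_mul_apply]⟩

lemma B_root_self (hg : IsGeometric cs ρ B) {β : I → ℝ} (hβ : β ∈ Phi ρ) : B β β = 1 := by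
  obtain ⟨z, r, rfl⟩ := hβ
  rw [B_rho_inv hg, B_sroot_self hg]

lemma root_ne_zero (hg : IsGeometric cs ρ B) {β : I → ℝ} (hβ : β ∈ Phi ρ) : β ≠ 0 := by
  intro h
  have := B_root_self hg hβ
  rw [h] at this; simp at this

lemma neg_root_mem {β : I → ℝ} (hβ : β ∈ Phi ρ) (hg : IsGeometric cs ρ B) : -β ∈ Phi ρ := by
  obtain ⟨z, r, rfl⟩ := hβ
  refine ⟨z * cs.simple r, r, ?_⟩
  have h1 : ρ (cs.simple r) (sroot r) = - sroot r := by
    rw [hg.simple_apply, B_sroot_self hg]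
    funext j; simp; ring
  rw [rho_mul_apply, h1, map_neg]

end BKAux
namespace BKAux
open BKBilliards CoxeterSystem

def Cheb (c : ℝ) : ℕ → ℝ
  | 0 => 0
  | 1 => 1
  | (k+2) => 2*c*Cheb c (k+1) - Cheb c k

lemma cheb_one : ∀ k, Cheb 1 k = k
  | 0 => by simp [Cheb]
  | 1 => by simp [Cheb]
  | (k+2) => by
      show 2*1*Cheb 1 (k+1) - Cheb 1 k = _
      rw [cheb_one (k+1), cheb_one k]; push_cast; ring

lemma cheb_cos (θ : ℝ) (hs : Real.sin θ ≠ 0) :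
    ∀ k, Cheb (Real.cos θ) k = Real.sin (k*θ)/Real.sin θ
  | 0 => by simp [Cheb]
  | 1 => by
      show (1:ℝ) = _
      rw [Nat.cast_one, one_mul]
      field_simp
  | (k+2) => by
      show 2*Real.cos θ*Cheb (Real.cos θ) (k+1) - Cheb (Real.cos θ) k = _
      rw [cheb_cos θ hs (k+1), cheb_cos θ hs k]
      push_cast
      have h1 : ((k:ℝ)+2)*θ = ((k:ℝ)+1)*θ + θ := by ring
      have h2 : (k:ℝ)*θ = ((k:ℝ)+1)*θ - θ := by ring
      rw [h1, h2, Real.sin_add, Real.sin_sub]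
      field_simp
      ring

lemma cheb_nonneg_fin {m : ℕ} (hm : 2 ≤ m) {k : ℕ} (hk : k ≤ m) :
    0 ≤ Cheb (Real.cos (Real.pi / m)) k := by
  have hm0 : (0:ℝ) < m := by positivity
  have hθpos : 0 < Real.pi / m := by positivity
  have hθlt : Real.pi / m < Real.pi := by
    rw [div_lt_iff₀ hm0]
    nlinarith [Real.pi_pos, mul_le_mul_of_nonneg_left (by exact_mod_cast hm : (2:ℝ) ≤ m) Real.pi_pos.le]
  have hs : 0 < Real.sin (Real.pi/m) := Real.sin_pos_of_pos_of_lt_pi hθpos hθlt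
  rw [cheb_cos _ hs.ne']
  apply div_nonneg _ hs.le
  apply Real.sin_nonneg_of_nonneg_of_le_pi
  · positivity
  · calc (k:ℝ) * (Real.pi/m) ≤ (m:ℝ) * (Real.pi/m) := by
          apply mul_le_mul_of_nonneg_right _ hθpos.le
          exact_mod_cast hk
      _ = Real.pi := by field_simp

end BKAux
namespace BKAux
open BKBilliards CoxeterSystem

variable {I : Type*} [Fintype I] [DecidableEq I] {M : CoxeterMatrix I} {W : Type*} [Group W]
variable {cs : CoxeterSystem M W} {ρ : Representation ℝ W (I → ℝ)}
variable {B : LinearMap.BilinForm ℝ (I → ℝ)}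

lemma rho_simple_self (hg : IsGeometric cs ρ B) (i : I) :
    ρ (cs.simple i) (sroot i) = - sroot i := by
  rw [hg.simple_apply, B_sroot_self hg]
  funext j; simp; ring

lemma alt_formula (hg : IsGeometric cs ρ B) (i j : I) (hij : i ≠ j) (k : ℕ) :
    ρ (cs.wordProd (alternatingWord i j k)) (sroot i) =
      if Even k then
        Cheb (-B (sroot i) (sroot j)) (k+1) • sroot i + Cheb (-B (sroot i) (sroot j)) k • sroot j
      else
        Cheb (-B (sroot i) (sroot j)) (k+1) • sroot j + Cheb (-B (sroot i) (sroot j)) k • sroot i := by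
  set c : ℝ := -B (sroot i) (sroot j) with hc
  induction k with
  | zero => simp [alternatingWord, Cheb]
  | succ k ih =>
      rw [alternatingWord_succ', wordProd_cons, rho_mul_apply, ih]
      by_cases hk : Even k
      · have hk1 : ¬ Even (k+1) := by simp [Nat.even_add_one, hk]
        simp only [hk, hk1, if_true, if_false, if_pos, if_neg]
        rw [map_add, map_smul, map_smul, hg.simple_apply (i := j), rho_simple_self hg j]
        have hrec : Cheb c (k+2) = 2*c*Cheb c (k+1) - Cheb c k := by simp [Cheb]
        rw [hrec, hc]
        module
      · have hk1 : Even (k+1) := Nat.even_add_one.mpr hk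
        simp only [hk, hk1, if_true, if_false, if_pos, if_neg]
        rw [map_add, map_smul, map_smul, hg.simple_apply (i := i), rho_simple_self hg i]
        have hrec : Cheb c (k+2) = 2*c*Cheb c (k+1) - Cheb c k := by simp [Cheb]
        rw [hrec, hc, entry_symm hg j i]
        module

lemma alt_nonneg_decomp (hg : IsGeometric cs ρ B) (i j : I) (hij : i ≠ j) (k : ℕ)
    (hbound : M i j = 0 ∨ k + 1 ≤ M i j) :
    ∃ a b : ℝ, 0 ≤ a ∧ 0 ≤ b ∧
      ρ (cs.wordProd (alternatingWord i j k)) (sroot i) = a • sroot i + b • sroot j := by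
  set c : ℝ := -B (sroot i) (sroot j) with hc
  have hnonneg : ∀ n, n ≤ k + 1 → 0 ≤ Cheb c n := by
    intro n hn
    rcases hbound with h0 | hle
    · have : c = 1 := by rw [hc, hg.form_apply_of_eq_zero i j h0]; ring
      rw [this, cheb_one]; positivity
    · have hm2 : 2 ≤ M i j := by
        rcases Nat.lt_or_ge (M i j) 2 with h | h
        · interval_cases h' : M i j
          · omega
          · exact absurd h' (M.off_diagonal i j hij)
        · exact h
      have : c = Real.cos (Real.pi / (M i j : ℝ)) := by
        rw [hc, hg.form_apply_of_ne_zero i j (by omega)]; ring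
      rw [this]
      exact cheb_nonneg_fin hm2 (by omega)
  have h1 := hnonneg (k+1) le_rfl
  have h2 := hnonneg k (by omega)
  rw [alt_formula hg i j hij k]
  by_cases hk : Even k
  · exact ⟨Cheb c (k+1), Cheb c k, h1, h2, by simp [hk]; rfl⟩
  · exact ⟨Cheb c k, Cheb c (k+1), h2, h1, by simp [hk]; exact add_comm _ _⟩

end BKAux
namespace BKAux
open BKBilliards CoxeterSystem

variable {I : Type*} [Fintype I] [DecidableEq I] {M : CoxeterMatrix I} {W : Type*} [Group W]
variable {cs : CoxeterSystem M W} {ρ : Representation ℝ W (I → ℝ)}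
variable {B : LinearMap.BilinForm ℝ (I → ℝ)}

lemma chain'_of_reduced : ∀ (l : List I), cs.IsReduced l → l.Chain' (· ≠ ·)
  | [], _ => List.isChain_nil
  | [_], _ => List.isChain_singleton _
  | (a :: b :: t), h => by
      have htail : cs.IsReduced (b :: t) := by
        have := h.drop (j := 1)
        simpa using this
      rcases eq_or_ne a b with rfl | hab
      · exfalso
        have hw : cs.wordProd (a :: a :: t) = cs.wordProd t := by
          rw [wordProd_cons, wordProd_cons, simple_mul_simple_cancel_left]
        have h1 : cs.length (cs.wordProd (a :: a :: t)) = (a :: a :: t).length := h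
        rw [hw] at h1
        have := cs.length_wordProd_le t
        simp [h1] at this
      · exact List.isChain_cons_cons.mpr ⟨hab, chain'_of_reduced (b :: t) htail⟩

lemma altrev : ∀ (ψ : List I) (i j : I), i ≠ j → (∀ r ∈ ψ, r = i ∨ r = j) →
    (j :: ψ).Chain' (· ≠ ·) → j :: ψ = (alternatingWord i j (ψ.length + 1)).reverse
  | [], i, j, _, _, _ => by simp [alternatingWord]
  | (r :: ψ'), i, j, hij, hmem, hch => by
      have hjr : j ≠ r := (List.isChain_cons_cons.mp hch).1
      have hr : r = i := by
        rcases hmem r (by simp) with h | h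
        · exact h
        · exact absurd h.symm hjr
      subst hr
      have hch' : (r :: ψ').Chain' (· ≠ ·) := (List.isChain_cons_cons.mp hch).2
      have ih := altrev ψ' j r hij.symm
        (fun x hx => Or.symm (hmem x (List.mem_cons_of_mem _ hx))) hch'
      simp only [List.length_cons]
      rw [alternatingWord_succ]
      simp only [List.concat_eq_append, List.reverse_append, List.reverse_cons, List.reverse_nil,
        List.nil_append, List.singleton_append]
      rw [← ih]


lemma strip (i j : I) : ∀ (n : ℕ) (w : W), cs.length w ≤ n →
    ∃ (v : W) (ω : List I), (∀ r ∈ ω, r = i ∨ r = j) ∧ w = v * cs.wordProd ω ∧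
      cs.length w = cs.length v + ω.length ∧
      ¬ cs.IsRightDescent v i ∧ ¬ cs.IsRightDescent v j := by
  intro n
  induction n with
  | zero =>
      intro w hw
      have hw1 : w = 1 := by
        rw [← cs.length_eq_zero_iff]; omega
      exact ⟨w, [], by simp, by simp, by simp,
        by rw [hw1]; exact cs.not_isRightDescent_one i, by rw [hw1]; exact cs.not_isRightDescent_one j⟩
  | succ n ih =>
      intro w hw
      by_cases hdi : cs.IsRightDescent w i
      · have hlen : cs.length (w * cs.simple i) + 1 = cs.length w := (cs.isRightDescent_iff).mp hdi
        obtain ⟨v, ω, hmem, hprod, hlens, hvi, hvj⟩ := ih (w * cs.simple i) (by omega)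
        refine ⟨v, ω ++ [i], ?_, ?_, ?_, hvi, hvj⟩
        · intro r hr
          rcases List.mem_append.mp hr with h | h
          · exact hmem r h
          · left; simpa using h
        · rw [wordProd_append, wordProd_singleton, ← mul_assoc, ← hprod,
            simple_mul_simple_cancel_right]
        · rw [List.length_append]; simp; omega
      · by_cases hdj : cs.IsRightDescent w j
        · have hlen : cs.length (w * cs.simple j) + 1 = cs.length w := (cs.isRightDescent_iff).mp hdj
          obtain ⟨v, ω, hmem, hprod, hlens, hvi, hvj⟩ := ih (w * cs.simple j) (by omega)
          refine ⟨v, ω ++ [j], ?_, ?_, ?_, hvi, hvj⟩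
          · intro r hr
            rcases List.mem_append.mp hr with h | h
            · exact hmem r h
            · right; simpa using h
          · rw [wordProd_append, wordProd_singleton, ← mul_assoc, ← hprod,
              simple_mul_simple_cancel_right]
          · rw [List.length_append]; simp; omega
        · exact ⟨w, [], by simp, by simp, by simp, hdi, hdj⟩

end BKAux
namespace BKAux
open BKBilliards CoxeterSystem

variable {I : Type*} [Fintype I] [DecidableEq I] {M : CoxeterMatrix I} {W : Type*} [Group W]
variable {cs : CoxeterSystem M W} {ρ : Representation ℝ W (I → ℝ)}
variable {B : LinearMap.BilinForm ℝ (I → ℝ)}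

theorem rho_nonneg_of_not_descent (hg : IsGeometric cs ρ B) :
    ∀ (n : ℕ) (w : W), cs.length w ≤ n → ∀ i : I, ¬ cs.IsRightDescent w i →
      0 ≤ ρ w (sroot i) := by
  intro n
  induction n with
  | zero =>
      intro w hw i _
      have hw1 : w = 1 := by rw [← cs.length_eq_zero_iff]; omega
      rw [hw1, map_one, Module.End.one_apply]
      exact sroot_nonneg i
  | succ n ih =>
      intro w hw i hni
      rcases eq_or_ne w 1 with rfl | hne
      · rw [map_one, Module.End.one_apply]; exact sroot_nonneg i
      obtain ⟨j, hdj⟩ := cs.exists_rightDescent_of_ne_one hne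
      have hij : i ≠ j := by rintro rfl; exact hni hdj
      obtain ⟨v, ω, hmem, hprod, hlens, hvi, hvj⟩ := strip i j (cs.length w) w le_rfl
      have hωne : ω ≠ [] := by
        rintro rfl
        rw [wordProd_nil, mul_one] at hprod
        exact hvj (hprod ▸ hdj)
      have hk1 : 1 ≤ ω.length := List.length_pos_iff.mpr hωne
      have hvposi : 0 ≤ ρ v (sroot i) := ih v (by omega) i hvi
      have hvposj : 0 ≤ ρ v (sroot j) := ih v (by omega) j hvj
      -- reducedness of ω ++ [i]
      have hlenwsi : cs.length (w * cs.simple i) = cs.length w + 1 :=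
        (cs.not_isRightDescent_iff).mp hni
      have hprodi : w * cs.simple i = v * cs.wordProd (ω ++ [i]) := by
        rw [wordProd_append, wordProd_singleton, ← mul_assoc, ← hprod]
      have hred : cs.IsReduced (ω ++ [i]) := by
        have hub := cs.length_wordProd_le (ω ++ [i])
        have hlb := cs.length_mul_le v (cs.wordProd (ω ++ [i]))
        rw [← hprodi] at hlb
        simp only [List.length_append, List.length_singleton] at hub
        unfold CoxeterSystem.IsReduced
        simp only [List.length_append, List.length_singleton]
        omega
      have hchain : (ω ++ [i]).Chain' (· ≠ ·) := chain'_of_reduced _ hred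
      have hchainrev : ((ω ++ [i]).reverse).Chain' (· ≠ ·) := by
        refine List.isChain_reverse.mpr ?_
        exact hchain.imp fun a b hab => hab.symm
      rw [List.reverse_append, List.reverse_singleton, List.singleton_append] at hchainrev
      obtain ⟨r, ψ, hψ⟩ := List.exists_cons_of_ne_nil (fun h => hωne (by
        simpa using congrArg List.reverse h) : ω.reverse ≠ [])
      rw [hψ] at hchainrev
      have hir : i ≠ r := (List.isChain_cons_cons.mp hchainrev).1
      have hrj : r = j := by
        have : r ∈ ω := by
          have : r ∈ ω.reverse := by rw [hψ]; simp
          simpa using this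
        rcases hmem r this with h | h
        · exact absurd h.symm hir
        · exact h
      rw [hrj] at hψ hchainrev
      have hψmem : ∀ x ∈ ψ, x = i ∨ x = j := by
        intro x hx
        apply hmem
        have : x ∈ ω.reverse := by rw [hψ]; simp [hx]
        simpa using this
      have halt := altrev ψ i j hij hψmem (List.isChain_cons_cons.mp hchainrev).2
      have hωalt : ω = alternatingWord i j (ψ.length + 1) := by
        have : ω.reverse = (alternatingWord i j (ψ.length + 1)).reverse := by rw [hψ, halt]
        have := congrArg List.reverse this
        simpa using this
      set k := ψ.length + 1 with hkdef
      have hklen : ω.length = k := by rw [hωalt]; exact CoxeterSystem.length_alternatingWord i j k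
      -- bound on k
      have hbound : M i j = 0 ∨ k + 1 ≤ M i j := by
        by_cases h0 : M i j = 0
        · exact Or.inl h0
        right
        by_contra hgt
        have hsym := M.isSymm.apply i j
        apply cs.not_isReduced_alternatingWord j i (by omega) (m := k+1) (by omega)
        have : ω ++ [i] = alternatingWord j i (k+1) := by
          rw [alternatingWord_succ, ← hωalt, List.concat_eq_append]
        rwa [this] at hred
      obtain ⟨a, b, ha, hb, hdecomp⟩ := alt_nonneg_decomp hg i j hij k hbound
      rw [← hωalt] at hdecomp
      have : ρ w (sroot i) = a • ρ v (sroot i) + b • ρ v (sroot j) := by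
        rw [hprod, rho_mul_apply, hdecomp, map_add, map_smul, map_smul]
      rw [this]
      exact add_nonneg (smul_nonneg ha hvposi) (smul_nonneg hb hvposj)

lemma rho_simple_simple (i : I) (x : I → ℝ) : ρ (cs.simple i) (ρ (cs.simple i) x) = x := by
  rw [← rho_mul_apply, cs.simple_mul_simple_self, map_one, Module.End.one_apply]

lemma root_dichotomy (hg : IsGeometric cs ρ B) {β : I → ℝ} (hβ : β ∈ Phi ρ) :
    0 ≤ β ∨ β ≤ 0 := by
  obtain ⟨z, r, rfl⟩ := hβ
  by_cases hd : cs.IsRightDescent z r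
  · right
    have h2 : ¬ cs.IsRightDescent (z * cs.simple r) r :=
      (cs.isRightDescent_iff_not_isRightDescent_mul).mp hd
    have hpos : 0 ≤ ρ (z * cs.simple r) (sroot r) :=
      rho_nonneg_of_not_descent hg (cs.length (z * cs.simple r)) _ le_rfl r h2
    have : ρ z (sroot r) = - ρ (z * cs.simple r) (sroot r) := by
      conv_lhs => rw [← cs.simple_mul_simple_cancel_right (w := z) r]
      rw [rho_mul_apply, rho_simple_self hg, map_neg]
    rw [this]
    exact neg_nonpos_of_nonneg hpos
  · left
    exact rho_nonneg_of_not_descent hg (cs.length z) z le_rfl r hd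

lemma rho_simple_neg_root (hg : IsGeometric cs ρ B) {β : I → ℝ} (i : I) (hβ : β ∈ Phi ρ)
    (hneg : β ≤ 0) (hne : β ≠ -(sroot i)) : ρ (cs.simple i) β ≤ 0 := by
  have hδΦ : ρ (cs.simple i) β ∈ Phi ρ := Phi_rho_mem _ hβ
  rcases root_dichotomy hg hδΦ with hδpos | hδneg
  · exfalso
    set δ := ρ (cs.simple i) β with hδdef
    have hβδ : β = ρ (cs.simple i) δ := (rho_simple_simple i β).symm
    have hexp : ρ (cs.simple i) δ = δ - (2 * B δ (sroot i)) • sroot i := hg.simple_apply i δ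
    have hcoord : ∀ r, r ≠ i → δ r = 0 := by
      intro r hr
      have h1 : β r = δ r := by
        rw [hβδ, hexp]
        simp [sroot, Pi.single_apply, hr.symm]
      have hb := hneg r
      have hd := hδpos r
      simp only [Pi.zero_apply] at hb hd
      linarith
    have hδeq : δ = δ i • sroot i := by
      funext r
      by_cases hr : r = i
      · subst hr; simp [sroot]
      · simp [sroot, Pi.single_apply, hr, Ne.symm hr, hcoord r hr]
    have hB1 : B δ δ = 1 := B_root_self hg hδΦ
    rw [hδeq] at hB1
    simp only [map_smul, LinearMap.smul_apply, smul_eq_mul] at hB1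
    rw [B_sroot_self hg] at hB1
    have hδi : 0 ≤ δ i := by
      have := hδpos i; simpa using this
    have hδi1 : δ i = 1 := by nlinarith
    rw [hδi1, one_smul] at hδeq
    apply hne
    rw [hβδ, hδeq, rho_simple_self hg]
  · exact hδneg

end BKAux
namespace BKAux
open BKBilliards CoxeterSystem

variable {I : Type*} [Fintype I] [DecidableEq I] {M : CoxeterMatrix I} {W : Type*} [Group W]
variable {cs : CoxeterSystem M W} {ρ : Representation ℝ W (I → ℝ)}
variable {B : LinearMap.BilinForm ℝ (I → ℝ)}

lemma not_neg_mem_RL (hg : IsGeometric cs ρ B) {L : Set W} (hL : L.Nonempty) {β : I → ℝ}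
    (h1 : β ∈ RL ρ L) (h2 : -β ∈ RL ρ L) : False := by
  obtain ⟨p, hp⟩ := hL
  obtain ⟨hφ, hup⟩ := h1
  obtain ⟨_, hdn⟩ := h2
  have ha : 0 ≤ ρ p β := hup p hp
  have hb : 0 ≤ ρ p (-β) := hdn p hp
  rw [map_neg] at hb
  have hz : ρ p β = 0 := le_antisymm (neg_nonneg.mp hb) ha
  have : β = 0 := by
    have := congrArg (ρ p⁻¹) hz
    rwa [rho_inv_cancel, map_zero] at this
  exact root_ne_zero hg hφ this

theorem key (hg : IsGeometric cs ρ B) {L : Set W} (hL : L.Nonempty) :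
    ∀ (l : List I), cs.IsReduced l → ∀ u : W,
      Sep ρ L (toggleWord ρ cs L l u) ⊆
        Sep ρ L ((cs.wordProd l)⁻¹ * toggleWord ρ cs L l u) := by
  intro l
  induction l with
  | nil =>
      intro _ u β hβ
      have h : (cs.wordProd ([] : List I))⁻¹ * (toggleWord ρ cs L [] u)
          = toggleWord ρ cs L [] u := by
        rw [wordProd_nil, inv_one, one_mul]
      rw [h]
      exact hβ
  | cons i l' ih =>
      intro hred u
      have hred' : cs.IsReduced l' := by
        have := hred.drop (j := 1); simpa using this
      have IH := ih hred' u
      set v' := toggleWord ρ cs L l' u with hv'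
      have hunfold : toggleWord ρ cs L (i :: l') u = toggle ρ cs L i v' := rfl
      have hlen : cs.length (cs.wordProd (i :: l')) = l'.length + 1 := by
        have : cs.length (cs.wordProd (i :: l')) = (i :: l').length := hred
        simpa using this
      have hndesc : ¬ cs.IsRightDescent (cs.wordProd l')⁻¹ i := by
        rw [cs.not_isRightDescent_iff]
        have h1 : (cs.wordProd l')⁻¹ * cs.simple i = (cs.simple i * cs.wordProd l')⁻¹ := by
          rw [mul_inv_rev, cs.inv_simple]
        rw [h1, cs.length_inv, cs.length_inv, ← wordProd_cons, hlen]
        rw [hred']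
      have hpos : 0 ≤ ρ (cs.wordProd l')⁻¹ (sroot i) :=
        rho_nonneg_of_not_descent hg _ _ le_rfl i hndesc
      rw [hunfold]
      by_cases hfire : ρ v'⁻¹ (sroot i) ∈ RL ρ L
      · -- toggle does not fire
        rw [toggle, if_pos hfire]
        intro β hβ
        obtain ⟨hβRL, hβneg⟩ := hβ
        obtain ⟨hβΦ, hβup⟩ := hβRL
        have hwsplit : (cs.wordProd (i :: l'))⁻¹ * v'
            = (cs.wordProd l')⁻¹ * (cs.simple i * v') := by
          rw [wordProd_cons, mul_inv_rev, cs.inv_simple, mul_assoc]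
        refine ⟨⟨hβΦ, hβup⟩, ?_⟩
        rw [hwsplit]
        set x := ρ v' β with hx
        have hxΦ : x ∈ Phi ρ := Phi_rho_mem v' hβΦ
        have hxne : x ≠ -(sroot i) := by
          intro hxeq
          have hβeq : -β = ρ v'⁻¹ (sroot i) := by
            have := congrArg (ρ v'⁻¹) hxeq
            rw [rho_inv_cancel, map_neg] at this
            rw [this, neg_neg]
          exact not_neg_mem_RL hg hL ⟨hβΦ, hβup⟩ (hβeq ▸ hfire)
        have hsix : ρ (cs.simple i) x ≤ 0 := rho_simple_neg_root hg i hxΦ hβneg hxne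
        have hgoal_eq : ρ ((cs.wordProd l')⁻¹ * (cs.simple i * v')) β
            = ρ (cs.wordProd l')⁻¹ (ρ (cs.simple i) x) := by
          rw [rho_mul_apply, rho_mul_apply, hx]
        rw [hgoal_eq]
        set t := B x (sroot i) with ht
        by_cases htpos : 0 < t
        · have hexp : ρ (cs.wordProd l')⁻¹ (ρ (cs.simple i) x)
              = ρ ((cs.wordProd l')⁻¹ * v') β - (2*t) • ρ (cs.wordProd l')⁻¹ (sroot i) := by
            rw [hg.simple_apply, map_sub, map_smul, rho_mul_apply, ← hx, ← ht]
          rw [hexp]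
          have hIH : ρ ((cs.wordProd l')⁻¹ * v') β ≤ 0 := (IH ⟨⟨hβΦ, hβup⟩, hβneg⟩).2
          have h2 : (0 : I → ℝ) ≤ (2*t) • ρ (cs.wordProd l')⁻¹ (sroot i) :=
            smul_nonneg (by linarith) hpos
          exact sub_nonpos.mpr (le_trans hIH h2)
        · push_neg at htpos
          set θ : I → ℝ := β - (2*t) • ρ v'⁻¹ (sroot i) with hθ
          have hθeq : θ = ρ v'⁻¹ (ρ (cs.simple i) x) := by
            rw [hg.simple_apply, map_sub, map_smul, rho_inv_cancel, ← ht, hθ]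
          have hθΦ : θ ∈ Phi ρ := by
            rw [hθeq]
            exact Phi_rho_mem _ (Phi_rho_mem _ hxΦ)
          have hθRL : θ ∈ RL ρ L := by
            refine ⟨hθΦ, fun p hp => ?_⟩
            have h1 : 0 ≤ ρ p β := hβup p hp
            have h2 : 0 ≤ ρ p (ρ v'⁻¹ (sroot i)) := hfire.2 p hp
            show 0 ≤ ρ p θ
            rw [hθ, map_sub, map_smul, sub_eq_add_neg, ← neg_smul]
            exact add_nonneg h1 (smul_nonneg (by linarith) h2)
          have hθv' : ρ v' θ ≤ 0 := by
            have : ρ v' θ = ρ (cs.simple i) x := by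
              rw [hθeq, rho_cancel_inv]
            rw [this]; exact hsix
          have hIH : ρ ((cs.wordProd l')⁻¹ * v') θ ≤ 0 := (IH ⟨hθRL, hθv'⟩).2
          have : ρ (cs.wordProd l')⁻¹ (ρ (cs.simple i) x) = ρ ((cs.wordProd l')⁻¹ * v') θ := by
            rw [rho_mul_apply, hθeq, rho_cancel_inv]
          rw [this]
          exact hIH
      · -- toggle fires
        rw [toggle, if_neg hfire]
        intro β hβ
        obtain ⟨hβRL, hβneg⟩ := hβ
        obtain ⟨hβΦ, hβup⟩ := hβRL
        have hwsplit : (cs.wordProd (i :: l'))⁻¹ * (cs.simple i * v')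
            = (cs.wordProd l')⁻¹ * v' := by
          rw [wordProd_cons, mul_inv_rev, cs.inv_simple, mul_assoc,
            cs.simple_mul_simple_cancel_left]
        refine ⟨⟨hβΦ, hβup⟩, ?_⟩
        rw [hwsplit]
        set y := ρ (cs.simple i * v') β with hy
        have hyΦ : y ∈ Phi ρ := Phi_rho_mem _ hβΦ
        have hyne : y ≠ -(sroot i) := by
          intro hyeq
          apply hfire
          have hβeq : β = ρ v'⁻¹ (sroot i) := by
            have h1 := congrArg (ρ (cs.simple i * v')⁻¹) hyeq
            rw [rho_inv_cancel, mul_inv_rev, cs.inv_simple, rho_mul_apply, map_neg,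
              rho_simple_self hg, neg_neg] at h1
            exact h1
          rw [← hβeq]
          exact ⟨hβΦ, hβup⟩
        have hsiy : ρ (cs.simple i) y ≤ 0 := rho_simple_neg_root hg i hyΦ hβneg hyne
        have hv'β : ρ v' β ≤ 0 := by
          have : ρ v' β = ρ (cs.simple i) y := by
            rw [hy, ← rho_mul_apply, cs.simple_mul_simple_cancel_left]
          rw [this]; exact hsiy
        exact (IH ⟨⟨hβΦ, hβup⟩, hv'β⟩).2

end BKAux

/-- If `𝗐` is a reduced word for `w`, then
`Sep(τ_𝗐(u)) ⊆ Sep(w⁻¹ τ_𝗐(u))` for all `u ∈ W`. -/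
theorem sep_toggleWord_subset
    {I : Type*} [Fintype I] [DecidableEq I] {M : CoxeterMatrix I} {W : Type*} [Group W]
    (cs : CoxeterSystem M W) (ρ : Representation ℝ W (I → ℝ))
    (B : LinearMap.BilinForm ℝ (I → ℝ)) (hgeom : IsGeometric cs ρ B)
    (L : Set W) (hL : L.Nonempty) (hconv : IsConvex ρ L)
    (w : W) (l : List I) (hred : cs.IsReduced l) (hprod : cs.wordProd l = w) :
    ∀ u : W, Sep ρ L (toggleWord ρ cs L l u) ⊆ Sep ρ L (w⁻¹ * toggleWord ρ cs L l u) := by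
  subst hprod
  exact BKAux.key hgeom hL l hred
end
end

section
/- Let i, i' ∈ I with m(i,i') = 2 (so s_i and s_{i'} commute), and let 𝓛 be a nonempty convex subset of W. Then the noninvertible Bender–Knuth toggles commute: τ_i ∘ τ_{i'} = τ_{i'} ∘ τ_i. -/
open scoped Classical

noncomputable section

open BKBilliards

/-!
When `m(i, i') = 2` the simple reflections `sᵢ` and `sᵢ'` commute and `B(αᵢ, αᵢ') = -cos (π/2) = 0`,
so `sᵢ'` fixes `αᵢ`. Hence left multiplication by `sᵢ'` does not change the root `u⁻¹ αᵢ` that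
decides whether `τᵢ` moves `u`, and `τᵢ (sᵢ' u) = sᵢ' (τᵢ u)`; symmetrically with `i` and `i'`
exchanged. Since `τᵢ' u` is either `u` or `sᵢ' u` (and likewise for `τᵢ`), the two toggles commute.
-/

namespace CoxeterSystem

variable {B : Type*} {M : CoxeterMatrix B} {W : Type*} [Group W]

theorem commute_simple_of_eq_two (cs : CoxeterSystem M W) {i i' : B} (hm : M i i' = 2) :
    Commute (cs.simple i) (cs.simple i') := by
  have hsq : (cs.simple i * cs.simple i') * (cs.simple i * cs.simple i') = 1 := by
    rw [← pow_two, ← hm, cs.simple_mul_simple_pow]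
  rw [Commute, SemiconjBy, mul_eq_one_iff_eq_inv.mp hsq, mul_inv_rev, cs.inv_simple,
    cs.inv_simple]

end CoxeterSystem

namespace BKBilliards

variable {I : Type*} [DecidableEq I] {M : CoxeterMatrix I} {W : Type*} [Group W]
  {ρ : Representation ℝ W (I → ℝ)} {cs : CoxeterSystem M W} {B : LinearMap.BilinForm ℝ (I → ℝ)}

theorem IsGeometric.form_sroot_eq_zero (hgeom : IsGeometric cs ρ B) {i i' : I}
    (hm : M i i' = 2) : B (sroot i) (sroot i') = 0 := by
  rw [hgeom.form_apply_of_ne_zero i i' (by omega), hm]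
  simp [Real.cos_pi_div_two]

theorem IsGeometric.simple_apply_sroot (hgeom : IsGeometric cs ρ B) {i i' : I}
    (hm : M i i' = 2) : ρ (cs.simple i') (sroot i) = sroot i := by
  simp [hgeom.simple_apply, hgeom.form_sroot_eq_zero hm]

variable (ρ cs) (L : Set W)

theorem toggle_of_mem {i : I} {u : W} (h : ρ u⁻¹ (sroot i) ∈ RL ρ L) :
    toggle ρ cs L i u = u :=
  if_pos h

theorem toggle_of_notMem {i : I} {u : W} (h : ρ u⁻¹ (sroot i) ∉ RL ρ L) :
    toggle ρ cs L i u = cs.simple i * u :=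
  if_neg h

theorem toggle_mul_of_commute {i : I} {w : W} (hfix : ρ w⁻¹ (sroot i) = sroot i)
    (hcomm : Commute (cs.simple i) w) (u : W) :
    toggle ρ cs L i (w * u) = w * toggle ρ cs L i u := by
  have hroot : ρ (w * u)⁻¹ (sroot i) = ρ u⁻¹ (sroot i) := by
    rw [mul_inv_rev, map_mul, Module.End.mul_apply, hfix]
  by_cases h : ρ u⁻¹ (sroot i) ∈ RL ρ L
  · rw [toggle_of_mem ρ cs L (by rwa [hroot]), toggle_of_mem ρ cs L h]
  · rw [toggle_of_notMem ρ cs L (by rwa [hroot]), toggle_of_notMem ρ cs L h, hcomm.left_comm]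

end BKBilliards

open BKBilliards

theorem toggle_comm_general
    {I : Type*} [DecidableEq I] {M : CoxeterMatrix I} {W : Type*} [Group W]
    (cs : CoxeterSystem M W) (ρ : Representation ℝ W (I → ℝ))
    (B : LinearMap.BilinForm ℝ (I → ℝ)) (hgeom : IsGeometric cs ρ B)
    (L : Set W)
    (i i' : I) (hm : M i i' = 2) :
    ∀ u : W, toggle ρ cs L i (toggle ρ cs L i' u) = toggle ρ cs L i' (toggle ρ cs L i u) := by
  intro u
  have hm' : M i' i = 2 := M.symmetric i' i ▸ hm
  have hcomm := cs.commute_simple_of_eq_two hm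
  have hi : ∀ v, toggle ρ cs L i (cs.simple i' * v) = cs.simple i' * toggle ρ cs L i v :=
    toggle_mul_of_commute ρ cs L (by rw [cs.inv_simple, hgeom.simple_apply_sroot hm]) hcomm
  have hi' : ∀ v, toggle ρ cs L i' (cs.simple i * v) = cs.simple i * toggle ρ cs L i' v :=
    toggle_mul_of_commute ρ cs L (by rw [cs.inv_simple, hgeom.simple_apply_sroot hm'])
      hcomm.symm
  by_cases h : ρ u⁻¹ (sroot i) ∈ RL ρ L <;> by_cases h' : ρ u⁻¹ (sroot i') ∈ RL ρ L
  · simp only [toggle_of_mem ρ cs L h, toggle_of_mem ρ cs L h']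
  · simp only [toggle_of_mem ρ cs L h, toggle_of_notMem ρ cs L h', hi]
  · simp only [toggle_of_notMem ρ cs L h, toggle_of_mem ρ cs L h', hi']
  · simp only [toggle_of_notMem ρ cs L h, toggle_of_notMem ρ cs L h', hi, hi', hcomm.left_comm]

/-- If `m(i, i') = 2`, then the toggles `τᵢ` and `τᵢ'` commute. -/
theorem toggle_comm
    {I : Type*} [Fintype I] [DecidableEq I] {M : CoxeterMatrix I} {W : Type*} [Group W]
    (cs : CoxeterSystem M W) (ρ : Representation ℝ W (I → ℝ))
    (B : LinearMap.BilinForm ℝ (I → ℝ)) (hgeom : IsGeometric cs ρ B)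
    (L : Set W) (hL : L.Nonempty) (hconv : IsConvex ρ L)
    (i i' : I) (hm : M i i' = 2) :
    ∀ u : W, toggle ρ cs L i (toggle ρ cs L i' u) = toggle ρ cs L i' (toggle ρ cs L i u) :=
  toggle_comm_general cs ρ B hgeom L i i' hm
end
end
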